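/- In the quadratic semi-stochastic setting with step size γ ∈ (0, 1/L), letting Ω_n = θ_n − θ_0 and η_0 = θ_0 − θ*, one has E[‖Ω_n‖²] = η_0ᵀ[I − (I − γH)ⁿ]² η_0 + γ tr([I − (I − γH)^{2n}](2I − γH)^{-1} H^{-1} C). -/

import Mathlib

/-!
Unrolling the recursion gives `Ω_n = (Aⁿ − I)η₀ + γ ∑_{k<n} Aᵏ ξ_{n−k}` with `A = I − γH`.
The noise terms are centred and pairwise independent, so every cross term has zero mean and
`E‖Ω_n‖² = ‖(Aⁿ − I)η₀‖² + γ² ∑_{k<n} tr(A²ᵏ C)`. The geometric sum is evaluated through the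
factorisation `I − A² = γ H (2I − γH)`, whose second factor is invertible because `γH ≺ I`.
-/

open MeasureTheory ProbabilityTheory Matrix Finset

namespace Matrix

variable {ι R : Type*} [Fintype ι]

theorem mulVec_dotProduct_mulVec {m n : Type*} [Fintype m] [Fintype n] [CommSemiring R]
    (M : Matrix ι m R) (N : Matrix ι n R) (x : m → R) (y : n → R) :
    (M *ᵥ x) ⬝ᵥ (N *ᵥ y) = ∑ a, ∑ b, (Mᵀ * N) a b * (x a * y b) := by
  rw [dotProduct_mulVec, ← vecMul_transpose, vecMul_vecMul]
  simp only [dotProduct, vecMul, sum_mul]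
  rw [sum_comm]
  exact sum_congr rfl fun a _ => sum_congr rfl fun b _ => by ring

variable [DecidableEq ι]

theorem eq_pow_mulVec_add_sum_of_recurrence [Semiring R] {A : Matrix ι ι R}
    {x f : ℕ → ι → R} (hx : ∀ k, x (k + 1) = A *ᵥ x k + f (k + 1)) (m : ℕ) :
    x m = A ^ m *ᵥ x 0 + ∑ k ∈ range m, A ^ k *ᵥ f (m - k) := by
  induction m with
  | zero => simp
  | succ m ih =>
    rw [hx, ih, sum_range_succ' (fun k => A ^ k *ᵥ f (m + 1 - k))]
    simp only [mulVec_add, mulVec_sum, mulVec_mulVec, ← pow_succ', Nat.add_sub_add_right,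
      pow_zero, one_mulVec, Nat.sub_zero, add_assoc]

theorem mulVec_dotProduct_mulVec_self [CommSemiring R] {B : Matrix ι ι R} (hB : Bᵀ = B)
    (x : ι → R) : (B *ᵥ x) ⬝ᵥ (B *ᵥ x) = x ⬝ᵥ (B ^ 2 *ᵥ x) := by
  rw [dotProduct_comm, dotProduct_mulVec, ← vecMul_transpose B, hB, vecMul_vecMul,
    ← dotProduct_mulVec, sq]

theorem sq_smul_geom_sum_eq [CommRing R] {A H W : Matrix ι ι R} {γ : R}
    (hA : 1 - A = γ • (H * W)) (hH : IsUnit H.det) (hW : IsUnit W.det) (n : ℕ) :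
    γ ^ 2 • ∑ k ∈ range n, A ^ k = γ • ((1 - A ^ n) * W⁻¹ * H⁻¹) := by
  have hHW : H * W * (W⁻¹ * H⁻¹) = 1 := by
    rw [mul_assoc, ← mul_assoc W, mul_nonsing_inv _ hW, one_mul, mul_nonsing_inv _ hH]
  rw [← geom_sum_mul_neg, hA, mul_smul_comm, smul_mul_assoc, smul_mul_assoc, smul_smul, ← sq,
    mul_assoc _ W⁻¹, mul_assoc, hHW, mul_one]

theorem isUnit_det_of_dotProduct_mulVec_ne_zero [Field R] {M : Matrix ι ι R}
    (h : ∀ v : ι → R, v ≠ 0 → v ⬝ᵥ (M *ᵥ v) ≠ 0) : IsUnit M.det := by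
  refine isUnit_iff_ne_zero.2 fun h0 => ?_
  obtain ⟨v, hv, hMv⟩ := exists_mulVec_eq_zero_iff.2 h0
  exact h v hv (by rw [hMv, dotProduct_zero])

theorem one_sub_one_sub_smul_sq [CommRing R] (γ : R) (H : Matrix ι ι R) :
    1 - (1 - γ • H) ^ 2 = γ • (H * ((2 : R) • 1 - γ • H)) := by
  simp only [sq, sub_mul, mul_sub, mul_one, one_mul, smul_mul_assoc, mul_smul_comm, smul_smul,
    smul_sub]
  module

theorem isUnit_det_two_smul_one_sub_smul {γ : ℝ} {H : Matrix ι ι ℝ}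
    (hγ : ∀ v : ι → ℝ, v ≠ 0 → γ * (v ⬝ᵥ H *ᵥ v) < v ⬝ᵥ v) :
    IsUnit ((2 : ℝ) • (1 : Matrix ι ι ℝ) - γ • H).det := by
  refine isUnit_det_of_dotProduct_mulVec_ne_zero fun v hv => ne_of_gt ?_
  have hvv : 0 ≤ v ⬝ᵥ v := sum_nonneg fun i _ => mul_self_nonneg (v i)
  simp only [sub_mulVec, smul_mulVec, one_mulVec, dotProduct_sub, dotProduct_smul, smul_eq_mul]
  linarith [hγ v hv]

end Matrix

section RandomVectors

variable {Ω m n p : Type*} [MeasurableSpace Ω] {μ : Measure Ω}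

noncomputable def crossMoment (μ : Measure Ω) (X : Ω → n → ℝ) (Y : Ω → p → ℝ) : Matrix n p ℝ :=
  Matrix.of fun a b => ∫ ω, X ω a * Y ω b ∂μ

variable [Fintype n]

theorem crossMoment_eq_zero_of_indepFun {X : Ω → n → ℝ} {Y : Ω → p → ℝ} (hXY : IndepFun X Y μ)
    (hX : Integrable X μ) (hY : AEMeasurable Y μ) (hX0 : ∫ ω, X ω ∂μ = 0) :
    crossMoment μ X Y = 0 := by
  ext a b
  have hab : IndepFun (fun ω => X ω a) (fun ω => Y ω b) μ :=
    hXY.comp (measurable_pi_apply a) (measurable_pi_apply b)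
  rw [crossMoment, of_apply, hab.integral_fun_mul_eq_mul_integral (hX.eval a).1
    ((measurable_pi_apply b).comp_aemeasurable hY).aestronglyMeasurable,
    ← eval_integral hX.eval, hX0]
  simp

variable [Fintype m] [Fintype p]

theorem integrable_mulVec_dotProduct_mulVec {X : Ω → n → ℝ} {Y : Ω → p → ℝ}
    (hX : MemLp X 2 μ) (hY : MemLp Y 2 μ) (M : Matrix m n ℝ) (N : Matrix m p ℝ) :
    Integrable (fun ω => (M *ᵥ X ω) ⬝ᵥ (N *ᵥ Y ω)) μ := by
  simp only [mulVec_dotProduct_mulVec]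
  refine integrable_finsetSum _ fun a _ => integrable_finsetSum _ fun b _ => ?_
  exact ((hX.eval a).integrable_mul (hY.eval b)).const_mul _

theorem integral_mulVec_dotProduct_mulVec {X : Ω → n → ℝ} {Y : Ω → p → ℝ}
    (hX : MemLp X 2 μ) (hY : MemLp Y 2 μ) (M : Matrix m n ℝ) (N : Matrix m p ℝ) :
    ∫ ω, (M *ᵥ X ω) ⬝ᵥ (N *ᵥ Y ω) ∂μ = trace (Nᵀ * M * crossMoment μ X Y) := by
  have hXY : ∀ a b, Integrable (fun ω => X ω a * Y ω b) μ := fun a b =>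
    (hX.eval a).integrable_mul (hY.eval b)
  have hterm : ∀ a b, Integrable (fun ω => (Mᵀ * N) a b * (X ω a * Y ω b)) μ := fun a b =>
    (hXY a b).const_mul _
  simp only [mulVec_dotProduct_mulVec]
  rw [integral_finsetSum _ fun a _ => integrable_finsetSum _ fun b _ => hterm a b]
  simp only [integral_finsetSum _ fun b _ => hterm _ b, integral_const_mul]
  rw [show Nᵀ * M = (Mᵀ * N)ᵀ by rw [transpose_mul, transpose_transpose]]
  simp only [trace, Matrix.diag, mul_apply, transpose_apply, crossMoment, of_apply]
  rw [sum_comm]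

theorem integrable_dotProduct_mulVec {X : Ω → n → ℝ} (hX : Integrable X μ) (u : m → ℝ)
    (M : Matrix m n ℝ) : Integrable (fun ω => u ⬝ᵥ (M *ᵥ X ω)) μ := by
  simp_rw [dotProduct_mulVec u M, dotProduct]
  exact integrable_finsetSum _ fun a _ => (hX.eval a).const_mul _

theorem integral_dotProduct_mulVec {X : Ω → n → ℝ} (hX : Integrable X μ) (u : m → ℝ)
    (M : Matrix m n ℝ) : ∫ ω, u ⬝ᵥ (M *ᵥ X ω) ∂μ = u ⬝ᵥ (M *ᵥ ∫ ω, X ω ∂μ) := by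
  simp_rw [dotProduct_mulVec u M, dotProduct]
  rw [integral_finsetSum _ fun a _ => (hX.eval a).const_mul _]
  simp only [integral_const_mul, eval_integral hX.eval]

theorem integral_add_sum_mulVec_dotProduct_self [IsProbabilityMeasure μ] {κ : Type*}
    {s : Finset κ} {ξ : κ → Ω → n → ℝ} {C : Matrix n n ℝ} (hL2 : ∀ k, MemLp (ξ k) 2 μ)
    (hmean : ∀ k, ∫ ω, ξ k ω ∂μ = 0)
    (hindep : (s : Set κ).Pairwise fun k l => IndepFun (ξ k) (ξ l) μ)
    (hcov : ∀ k, crossMoment μ (ξ k) (ξ k) = C) (u : m → ℝ) (M : κ → Matrix m n ℝ) :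
    ∫ ω, (u + ∑ k ∈ s, M k *ᵥ ξ k ω) ⬝ᵥ (u + ∑ k ∈ s, M k *ᵥ ξ k ω) ∂μ =
      u ⬝ᵥ u + ∑ k ∈ s, trace ((M k)ᵀ * M k * C) := by
  classical
  have hint : ∀ k, Integrable (ξ k) μ := fun k => (hL2 k).integrable one_le_two
  have hlin : ∀ k, Integrable (fun ω => u ⬝ᵥ (M k *ᵥ ξ k ω)) μ := fun k =>
    integrable_dotProduct_mulVec (hint k) u (M k)
  have hquad : ∀ k l, Integrable (fun ω => (M k *ᵥ ξ k ω) ⬝ᵥ (M l *ᵥ ξ l ω)) μ := fun k l =>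
    integrable_mulVec_dotProduct_mulVec (hL2 k) (hL2 l) (M k) (M l)
  have hexpand : ∀ ω, (u + ∑ k ∈ s, M k *ᵥ ξ k ω) ⬝ᵥ (u + ∑ k ∈ s, M k *ᵥ ξ k ω) =
      u ⬝ᵥ u + 2 * ∑ k ∈ s, u ⬝ᵥ (M k *ᵥ ξ k ω) +
        ∑ k ∈ s, ∑ l ∈ s, (M k *ᵥ ξ k ω) ⬝ᵥ (M l *ᵥ ξ l ω) := by
    intro ω
    set S := ∑ k ∈ s, M k *ᵥ ξ k ω
    have : (u + S) ⬝ᵥ (u + S) = u ⬝ᵥ u + 2 * u ⬝ᵥ S + S ⬝ᵥ S := by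
      rw [add_dotProduct, dotProduct_add, dotProduct_add, dotProduct_comm S u]
      ring
    rw [this, dotProduct_sum, sum_dotProduct]
    simp only [S, dotProduct_sum]
  have hlin0 : ∀ k, ∫ ω, u ⬝ᵥ (M k *ᵥ ξ k ω) ∂μ = 0 := fun k => by
    rw [integral_dotProduct_mulVec (hint k), hmean, mulVec_zero, dotProduct_zero]
  have hquad_eq : ∀ k ∈ s, ∀ l ∈ s, ∫ ω, (M k *ᵥ ξ k ω) ⬝ᵥ (M l *ᵥ ξ l ω) ∂μ =
      if k = l then trace ((M k)ᵀ * M k * C) else 0 := by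
    intro k hk l hl
    rw [integral_mulVec_dotProduct_mulVec (hL2 k) (hL2 l)]
    split_ifs with hkl
    · rw [hkl, hcov]
    · rw [crossMoment_eq_zero_of_indepFun (hindep hk hl hkl) (hint k)
        (hL2 l).aestronglyMeasurable.aemeasurable (hmean k), Matrix.mul_zero, trace_zero]
  simp only [hexpand]
  rw [integral_add (by fun_prop)
      (integrable_finsetSum _ fun k _ => integrable_finsetSum _ fun l _ => hquad k l),
    integral_add (integrable_const _) ((integrable_finsetSum _ fun k _ => hlin k).const_mul _),
    integral_const, integral_const_mul, integral_finsetSum _ fun k _ => hlin k,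
    integral_finsetSum _ fun k _ => integrable_finsetSum _ fun l _ => hquad k l]
  simp only [hlin0, sum_const_zero, mul_zero, add_zero, probReal_univ, one_smul]
  refine congrArg _ (sum_congr rfl fun k hk => ?_)
  rw [integral_finsetSum _ fun l _ => hquad k l, sum_congr rfl (hquad_eq k hk), sum_ite_eq,
    if_pos hk]

end RandomVectors

theorem stmt13_general {d : ℕ} {Ω : Type*} [MeasureSpace Ω]
    [IsProbabilityMeasure (volume : Measure Ω)]
    (H C : Matrix (Fin d) (Fin d) ℝ) (hH : H.PosDef)
    (γ : ℝ)
    -- `γ < 1/L` with `L = ‖H‖`, i.e. `γH ≺ I`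
    (hγ : ∀ v : Fin d → ℝ, v ≠ 0 → γ * (v ⬝ᵥ H.mulVec v) < v ⬝ᵥ v)
    (ξ : ℕ → Ω → (Fin d → ℝ)) (η : ℕ → Ω → (Fin d → ℝ)) (η0 : Fin d → ℝ)
    (hmeas : ∀ i, Measurable (ξ i))
    (hindep : iIndepFun ξ volume)
    (hmean : ∀ i, ∫ ω, ξ i ω = 0)
    (hcov : ∀ i a b, ∫ ω, ξ i ω a * ξ i ω b = C a b)
    (hL2 : ∀ i, Integrable (fun ω => ‖ξ i ω‖ ^ 2))
    (hη0 : ∀ ω, η 0 ω = η0)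
    (hrec : ∀ k ω, η (k + 1) ω = (1 - γ • H).mulVec (η k ω) + γ • ξ (k + 1) ω)
    (n : ℕ) :
    ∫ ω, (η n ω - η0) ⬝ᵥ (η n ω - η0) =
      η0 ⬝ᵥ (((1 - (1 - γ • H) ^ n) ^ 2).mulVec η0) +
      γ * Matrix.trace ((1 - (1 - γ • H) ^ (2 * n)) *
        ((2 : ℝ) • (1 : Matrix (Fin d) (Fin d) ℝ) - γ • H)⁻¹ * H⁻¹ * C) := by
  set A : Matrix (Fin d) (Fin d) ℝ := 1 - γ • H
  have hAt : Aᵀ = A := by simp [A, show Hᵀ = H from hH.1]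
  have hclosed : ∀ ω, η n ω - η0 =
      (A ^ n - 1) *ᵥ η0 + ∑ k ∈ range n, (γ • A ^ k) *ᵥ ξ (n - k) ω := by
    intro ω
    rw [eq_pow_mulVec_add_sum_of_recurrence (x := (η · ω)) (f := fun k => γ • ξ k ω)
      (fun k => hrec k ω) n, hη0, sub_mulVec, one_mulVec]
    simp only [smul_mulVec, mulVec_smul]
    abel
  have hnoise := integral_add_sum_mulVec_dotProduct_self (μ := volume) (s := range n)
    (ξ := fun k => ξ (n - k)) (C := C)
    (fun k => (memLp_two_iff_integrable_sq_norm (hmeas _).aestronglyMeasurable).2 (hL2 _))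
    (fun k => hmean _)
    (fun k hk l hl hkl => hindep.indepFun (by simp only [coe_range, Set.mem_Iio] at hk hl; omega))
    (fun k => by ext a b; exact hcov _ a b) ((A ^ n - 1) *ᵥ η0) (fun k => γ • A ^ k)
  have hterm : ∀ k, (γ • A ^ k)ᵀ * (γ • A ^ k) * C = (γ ^ 2 • (A ^ 2) ^ k) * C := fun k => by
    rw [transpose_smul, transpose_pow, hAt, smul_mul_smul_comm, ← pow_add, ← two_mul, pow_mul,
      ← sq]
  simp only [hclosed, hnoise, hterm]
  congr 1
  · rw [mulVec_dotProduct_mulVec_self (by rw [transpose_sub, transpose_pow, hAt, transpose_one]),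
      ← neg_sub, neg_sq]
  · rw [← trace_sum, ← sum_mul, ← smul_sum,
      sq_smul_geom_sum_eq (one_sub_one_sub_smul_sq γ H) hH.det_pos.ne'.isUnit
        (isUnit_det_two_smul_one_sub_smul hγ),
      smul_mul_assoc, trace_smul, smul_eq_mul, pow_mul]

/-- **Proposition 5 (closed form for the distance-based statistic).**
In the quadratic semi-stochastic setting with `γ ∈ (0, 1/L)`, `L = ‖H‖`,
letting `Ω_n = θ_n − θ₀` and `η₀ = θ₀ − θ*`,
`E‖Ω_n‖² = η₀ᵀ(I − (I−γH)ⁿ)²η₀ + γ tr((I − (I−γH)^{2n})(2I−γH)⁻¹H⁻¹C)`. -/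
theorem stmt13 {d : ℕ} {Ω : Type*} [MeasureSpace Ω]
    [IsProbabilityMeasure (volume : Measure Ω)]
    (H C : Matrix (Fin d) (Fin d) ℝ) (hH : H.PosDef)
    (γ : ℝ) (hγpos : 0 < γ)
    -- `γ < 1/L` with `L = ‖H‖`, i.e. `γH ≺ I`
    (hγ : ∀ v : Fin d → ℝ, v ≠ 0 → γ * (v ⬝ᵥ H.mulVec v) < v ⬝ᵥ v)
    (ξ : ℕ → Ω → (Fin d → ℝ)) (η : ℕ → Ω → (Fin d → ℝ)) (η0 : Fin d → ℝ)
    (hmeas : ∀ i, Measurable (ξ i))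
    (hindep : iIndepFun ξ volume)
    (hident : ∀ i j, Measure.map (ξ i) volume = Measure.map (ξ j) volume)
    (hmean : ∀ i, ∫ ω, ξ i ω = 0)
    (hcov : ∀ i a b, ∫ ω, ξ i ω a * ξ i ω b = C a b)
    (hL2 : ∀ i, Integrable (fun ω => ‖ξ i ω‖ ^ 2))
    (hη0 : ∀ ω, η 0 ω = η0)
    (hrec : ∀ k ω, η (k + 1) ω = (1 - γ • H).mulVec (η k ω) + γ • ξ (k + 1) ω)
    (n : ℕ) :
    ∫ ω, (η n ω - η0) ⬝ᵥ (η n ω - η0) =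
      η0 ⬝ᵥ (((1 - (1 - γ • H) ^ n) ^ 2).mulVec η0) +
      γ * Matrix.trace ((1 - (1 - γ • H) ^ (2 * n)) *
        ((2 : ℝ) • (1 : Matrix (Fin d) (Fin d) ℝ) - γ • H)⁻¹ * H⁻¹ * C) :=
  stmt13_general H C hH γ hγ ξ η η0 hmeas hindep hmean hcov hL2 hη0 hrec n
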